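/- Installation preserves validity: if s is a valid state and the precondition of (install app m c lRes) holds in s (the app is not installed, component identifiers in m are fresh and pairwise distinct, permissions defined in m are pairwise distinct and not defined by other apps, and intent filters are well formed), then install_post app m c lRes s is a valid state. -/

import Mathlib

abbrev AppId := ℕ
abbrev PermId := ℕ
abbrev PermGroup := ℕ
abbrev CompId := ℕ
abbrev Cert := ℕ
abbrev Res := ℕ
abbrev Val := ℕ

inductive PermLvl : Type
  | dangerous | normal | signature | signatureSystem
deriving DecidableEq

structure Perm where
  id : PermId
  group : Option PermGroup
  level : PermLvl
deriving DecidableEq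

structure Manifest where
  cmps : List CompId
  usedPerms : List PermId
  defines : List Perm

/-- A (simplified) Android state. -/
structure AndroidST where
  apps : List AppId
  grantedPermGroups : List (AppId × List PermGroup)
  grantedPerms : List (AppId × List Perm)
  manifests : List (AppId × Manifest)
  certs : List (AppId × Cert)
  defPerms : List (AppId × List Perm)
  resCont : List (AppId × Res × Val)
  sysImg : List AppId

def domain {α β : Type} (l : List (α × β)) : List α := l.map Prod.fst

/-- All component identifiers present in the device. -/
def allCmps (s : AndroidST) : List CompId :=
  (s.manifests.map (fun q => q.2.cmps)).flatten

/-- All identifiers of permissions defined by applications. -/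
def allDefPermIds (s : AndroidST) : List PermId :=
  ((s.defPerms.map Prod.snd).flatten).map Perm.id

/-- Well-formedness of states. -/
def valid_state (s : AndroidST) : Prop :=
  (allCmps s).Nodup ∧
  (allDefPermIds s).Nodup ∧
  (∀ a : AppId, a ∈ domain s.manifests ↔ a ∈ s.apps) ∧
  (∀ a : AppId, a ∈ domain s.certs ↔ a ∈ s.apps) ∧
  (∀ a : AppId, a ∈ domain s.defPerms ↔ a ∈ s.apps) ∧
  (∀ a : AppId, a ∈ domain s.grantedPerms ↔ (a ∈ s.apps ∨ a ∈ s.sysImg)) ∧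
  (∀ a : AppId, a ∈ domain s.grantedPermGroups ↔ (a ∈ s.apps ∨ a ∈ s.sysImg)) ∧
  s.apps.Nodup ∧ s.sysImg.Nodup ∧ (∀ a ∈ s.apps, a ∉ s.sysImg) ∧
  (domain s.manifests).Nodup ∧ (domain s.certs).Nodup ∧
  (domain s.defPerms).Nodup ∧ (domain s.grantedPerms).Nodup ∧
  (domain s.grantedPermGroups).Nodup

/-- The non-system permissions defined in a manifest. -/
def nonSystemUsrP (m : Manifest) : List Perm :=
  m.defines.filter (fun p => p.level ≠ PermLvl.signatureSystem)

/-- The default initial value of resources. -/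
def initVal : Val := 0

/-- The effect of installing a fresh application. -/
def install_post (app : AppId) (m : Manifest) (c : Cert) (lRes : List Res)
    (s : AndroidST) : AndroidST :=
  { apps := app :: s.apps
    grantedPermGroups := (app, []) :: s.grantedPermGroups
    grantedPerms := (app, []) :: s.grantedPerms
    manifests := (app, m) :: s.manifests
    certs := (app, c) :: s.certs
    defPerms := (app, nonSystemUsrP m) :: s.defPerms
    resCont := lRes.map (fun r => (app, r, initVal)) ++ s.resCont
    sysImg := s.sysImg }

theorem mem_domain_cons_iff {α β : Type} {l : List (α × β)} {x a : α} {y : β} :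
    a ∈ domain ((x, y) :: l) ↔ a = x ∨ a ∈ domain l :=
  List.mem_cons

theorem nodup_domain_cons {α β : Type} {l : List (α × β)} {x : α} (y : β)
    (hx : x ∉ domain l) (hl : (domain l).Nodup) : (domain ((x, y) :: l)).Nodup :=
  List.nodup_cons.2 ⟨hx, hl⟩

section install_post

variable (app : AppId) (m : Manifest) (c : Cert) (lRes : List Res) (s : AndroidST)

theorem allCmps_install_post : allCmps (install_post app m c lRes s) = m.cmps ++ allCmps s :=
  rfl

theorem allDefPermIds_install_post :
    allDefPermIds (install_post app m c lRes s) =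
      (nonSystemUsrP m).map Perm.id ++ allDefPermIds s :=
  List.map_append

end install_post

theorem nodup_map_id_nonSystemUsrP {m : Manifest} (h : (m.defines.map Perm.id).Nodup) :
    ((nonSystemUsrP m).map Perm.id).Nodup :=
  ((List.filter_sublist).map Perm.id).nodup h

theorem disjoint_map_id_nonSystemUsrP {m : Manifest} {l : List PermId}
    (h : ∀ p ∈ m.defines, p.id ∉ l) : ((nonSystemUsrP m).map Perm.id).Disjoint l := by
  rintro _ hx
  obtain ⟨p, hp, rfl⟩ := List.mem_map.1 hx
  exact h p (List.mem_of_mem_filter hp)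

theorem install_preserves_validity_general
    (s : AndroidST) (app : AppId) (m : Manifest) (c : Cert) (lRes : List Res)
    (hvalid : valid_state s)
    -- the application is not already installed (neither as a system app)
    (hnotinst : app ∉ s.apps ∧ app ∉ s.sysImg)
    -- component identifiers in the manifest are pairwise distinct…
    (hcmpnodup : m.cmps.Nodup)
    -- …and fresh with respect to those already present in the device
    (hcmpfresh : ∀ cid ∈ m.cmps, cid ∉ allCmps s)
    -- the permissions defined in the manifest are pairwise distinct…
    (hpermnodup : (m.defines.map Perm.id).Nodup)
    -- …and not defined by other applications
    (hpermfresh : ∀ p ∈ m.defines, p.id ∉ allDefPermIds s) :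
    valid_state (install_post app m c lRes s) := by
  obtain ⟨hcmps, hpermIds, hman, hcert, hdef, hgrant, hgrantGrp, happs, hsys, happsSys,
    hmanNodup, hcertNodup, hdefNodup, hgrantNodup, hgrantGrpNodup⟩ := hvalid
  obtain ⟨hna, hns⟩ := hnotinst
  refine ⟨?_, ?_, fun a => ?_, fun a => ?_, fun a => ?_, fun a => ?_, fun a => ?_,
    List.nodup_cons.2 ⟨hna, happs⟩, hsys, ?_,
    nodup_domain_cons m (mt (hman app).1 hna) hmanNodup,
    nodup_domain_cons c (mt (hcert app).1 hna) hcertNodup,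
    nodup_domain_cons _ (mt (hdef app).1 hna) hdefNodup,
    nodup_domain_cons [] (fun h => ((hgrant app).1 h).elim hna hns) hgrantNodup,
    nodup_domain_cons [] (fun h => ((hgrantGrp app).1 h).elim hna hns) hgrantGrpNodup⟩
  · rw [allCmps_install_post]
    exact hcmpnodup.append hcmps fun x hx => hcmpfresh x hx
  · rw [allDefPermIds_install_post]
    exact (nodup_map_id_nonSystemUsrP hpermnodup).append hpermIds
      (disjoint_map_id_nonSystemUsrP hpermfresh)
  · simp only [install_post, mem_domain_cons_iff, hman a, List.mem_cons]
  · simp only [install_post, mem_domain_cons_iff, hcert a, List.mem_cons]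
  · simp only [install_post, mem_domain_cons_iff, hdef a, List.mem_cons]
  · simp only [install_post, mem_domain_cons_iff, hgrant a, List.mem_cons, or_assoc]
  · simp only [install_post, mem_domain_cons_iff, hgrantGrp a, List.mem_cons, or_assoc]
  · rintro a (_ | ⟨_, ha⟩)
    exacts [hns, happsSys a ha]

/-- Installation preserves validity. -/
theorem install_preserves_validity
    (cmpDeclareIntentFilterCorrectly : CompId → Prop)
    (s : AndroidST) (app : AppId) (m : Manifest) (c : Cert) (lRes : List Res)
    (hvalid : valid_state s)
    -- the application is not already installed (neither as a system app)
    (hnotinst : app ∉ s.apps ∧ app ∉ s.sysImg)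
    -- component identifiers in the manifest are pairwise distinct…
    (hcmpnodup : m.cmps.Nodup)
    -- …and fresh with respect to those already present in the device
    (hcmpfresh : ∀ cid ∈ m.cmps, cid ∉ allCmps s)
    -- the permissions defined in the manifest are pairwise distinct…
    (hpermnodup : (m.defines.map Perm.id).Nodup)
    -- …and not defined by other applications
    (hpermfresh : ∀ p ∈ m.defines, p.id ∉ allDefPermIds s)
    -- intent filters are well formed
    (hfilters : ∀ cid ∈ m.cmps, cmpDeclareIntentFilterCorrectly cid) :
    valid_state (install_post app m c lRes s) :=
  install_preserves_validity_general s app m c lRes hvalid hnotinst hcmpnodup hcmpfresh hpermnodup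
    hpermfresh
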